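/- arXiv:2012.03629 — 2 statements merged into one kernel-verified Lean document; each statement's English description precedes it below -/
import Mathlib

section
/- Let T(n,k; a,c,d,e,f,g) be defined, with entries in ℤ[a,c,d,e,f,g], by T(0,k) = δ_{k0}, T(−1,k) = 0, and for n ≥ 1: T(n,k) = (a(n−k)+c)·T(n−1,k−1) + (dk+e)·T(n−1,k) + (f(n−2)+g)·T(n−2,k−1), with the convention that T(n,k) = 0 whenever k < 0 or k > n. Then for all 0 ≤ k ≤ n one has the reversal identity T(n,k; a,c,d,e,f,g) = T(n,n−k; d,e,a,c,f,g), i.e. the family is invariant under the reversal k → n−k upon interchanging (a,c) with (d,e) and leaving f and g unchanged. -/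
open MvPolynomial

/-- The ring ℤ[a,c,d,e,f,g]: variables 0,…,5 ↦ a,c,d,e,f,g. -/
abbrev R6 : Type := MvPolynomial (Fin 6) ℤ

/-- The array `T(n,k; a,c,d,e,f,g)` defined by `T(0,k) = δ_{k0}`, `T(−1,k) = 0`, and
`T(n,k) = (a(n−k)+c)·T(n−1,k−1) + (dk+e)·T(n−1,k) + (f(n−2)+g)·T(n−2,k−1)` for `n ≥ 1`.
The second index ranges over ℤ, so the convention `T(n,k) = 0` for `k < 0` or `k > n`
is automatic.  (For `n = 1` the third term vanishes since `T(−1,·) = 0`.) -/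
noncomputable def T (a c d e f g : R6) : ℕ → ℤ → R6
  | 0, k => if k = 0 then 1 else 0
  | 1, k => (a * ((1 - k : ℤ) : R6) + c) * T a c d e f g 0 (k - 1)
      + (d * ((k : ℤ) : R6) + e) * T a c d e f g 0 k
  | n + 2, k => (a * (((n : ℤ) + 2 - k : ℤ) : R6) + c) * T a c d e f g (n + 1) (k - 1)
      + (d * ((k : ℤ) : R6) + e) * T a c d e f g (n + 1) k
      + (f * ((n : ℤ) : R6) + g) * T a c d e f g n (k - 1)

lemma T_key (a c d e f g : R6) : ∀ (n : ℕ) (k : ℤ),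
    T a c d e f g n k = T d e a c f g n ((n : ℤ) - k) := by
  intro n
  induction n using Nat.twoStepInduction with
  | zero => intro k; simp [T, neg_eq_zero, eq_comm]
  | one =>
    intro k
    simp only [T]
    push_cast
    rcases eq_or_ne k 0 with hk0 | hk0
    · subst hk0; simp
    · rcases eq_or_ne k 1 with hk1 | hk1
      · subst hk1; simp
      · simp_all
        rw [if_neg (show ¬(k - 1 : ℤ) = 0 by omega),
          if_neg (show ¬(1 - k : ℤ) = 0 by omega)]
  | more n ih2 ih1 =>
    intro k
    simp only [T, ih1, ih2]
    push_cast
    ring_nf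

/-- The reversal identity: `T(n,k; a,c,d,e,f,g) = T(n,n−k; d,e,a,c,f,g)` for `0 ≤ k ≤ n`,
i.e. the family is invariant under the reversal `k → n−k` upon interchanging `(a,c)` with
`(d,e)` and leaving `f,g` unchanged. -/
theorem T_reversal (n k : ℕ) (hk : k ≤ n) :
    T (X 0) (X 1) (X 2) (X 3) (X 4) (X 5) n (k : ℤ)
      = T (X 2) (X 3) (X 0) (X 1) (X 4) (X 5) n ((n : ℤ) - (k : ℤ)) := by
  exact T_key _ _ _ _ _ _ n k
end

section
/- The Stirling subset triangle (S(n,k))_{n,k≥0} is totally positive: for every r ≥ 1 and all indices n_1 < ⋯ < n_r and k_1 < ⋯ < k_r, the determinant det(S(n_i,k_j))_{1≤i,j≤r} is nonnegative. -/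
/-
Adding a new element to a partition either creates a singleton block or joins one of the
existing blocks, so `S(n+1, k+1) = S(n, k) + (k+1) S(n, k+1)` and `S` is `Nat.stirlingSecond`.
Any triangle with `A(0, 0) ≥ 0`, `A(0, k) = 0` for `k > 0`, `A(n, 0) = 0` for `n > 0` and
a recurrence `A(n+1, k+1) = A(n, k) + w(k+1) A(n, k+1)` with `w ≥ 0` is totally positive:
expanding every column of a minor by the recurrence and using multilinearity, the minor becomes
a nonnegative combination of minors with all rows lowered by one and weakly increasing columns.
Those with a repeated column vanish and the others are nonnegative by induction. A minor using
row `0` is `A(0, k₁)` times a smaller minor.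
-/

/-- The Stirling subset number `S(n,k)`: the number of partitions of an
`n`-element set into exactly `k` nonempty blocks. -/
noncomputable def stirlingSubset (n k : ℕ) : ℕ :=
  Nat.card {P : Finpartition (Finset.univ : Finset (Fin n)) // P.parts.card = k}

open Finset Matrix

namespace Finpartition

theorem parts_avoid_of_mem {α : Type*} [GeneralizedBooleanAlgebra α] [DecidableEq α] {a b : α}
    (P : Finpartition a) (hb : b ∈ P.parts) : (P.avoid b).parts = P.parts.erase b := by
  ext c
  simp only [mem_avoid, mem_erase]
  constructor
  · rintro ⟨d, hd, hdb, rfl⟩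
    have hne : d ≠ b := fun h => hdb h.le
    have hdisj : Disjoint d b := P.disjoint hd hb hne
    rw [hdisj.sdiff_eq_left]
    exact ⟨hne, hd⟩
  · rintro ⟨hcb, hc⟩
    have hdisj : Disjoint c b := P.disjoint hc hb hcb
    exact ⟨c, hc, fun hle => P.ne_bot hc (hdisj.eq_bot_of_le hle), hdisj.sdiff_eq_left⟩

variable {α : Type*} [DecidableEq α] {s : Finset α} {a : α}

def removeSingleton (ha : a ∉ s) (P : Finpartition (insert a s)) : Finpartition s :=
  (P.avoid {a}).copy (by rw [sdiff_singleton_eq_erase, erase_insert ha])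

theorem parts_removeSingleton (ha : a ∉ s) (P : Finpartition (insert a s)) (h : {a} ∈ P.parts) :
    (P.removeSingleton ha).parts = P.parts.erase {a} := by
  simp [removeSingleton, parts_avoid_of_mem P h]

theorem part_erase_nonempty_of_singleton_notMem (P : Finpartition (insert a s))
    (h : {a} ∉ P.parts) : ((P.part a).erase a).Nonempty := by
  rw [nonempty_iff_ne_empty, Ne, erase_eq_empty_iff]
  rintro (he | he)
  · simp at he
  · exact h (he ▸ P.part_mem.2 (mem_insert_self a s))

def removeFromPart (ha : a ∉ s) (P : Finpartition (insert a s)) (h : {a} ∉ P.parts) :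
    Finpartition s :=
  (P.avoid (P.part a)).extend (b := (P.part a).erase a)
    (part_erase_nonempty_of_singleton_notMem P h).ne_empty
    (disjoint_of_subset_right (erase_subset _ _) sdiff_disjoint)
    (by
      have := P.part_subset a
      have := P.mem_part (mem_insert_self a s)
      ext x
      simp only [sup_eq_union', mem_union, mem_sdiff, mem_insert, mem_erase, ne_eq]
      grind)

theorem parts_removeFromPart (ha : a ∉ s) (P : Finpartition (insert a s)) (h : {a} ∉ P.parts) :
    (P.removeFromPart ha h).parts = insert ((P.part a).erase a) (P.parts.erase (P.part a)) := by
  simp [removeFromPart, parts_avoid_of_mem P (P.part_mem.2 (mem_insert_self a s))]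

theorem part_erase_notMem_erase (P : Finpartition (insert a s)) (h : {a} ∉ P.parts) :
    (P.part a).erase a ∉ P.parts.erase (P.part a) := by
  rintro hmem
  obtain ⟨x, hx⟩ := part_erase_nonempty_of_singleton_notMem P h
  exact (mem_erase.1 hmem).1 (P.eq_of_mem_parts (mem_erase.1 hmem).2
    (P.part_mem.2 (mem_insert_self a s)) hx (mem_of_mem_erase hx))

theorem card_parts_removeFromPart (ha : a ∉ s) (P : Finpartition (insert a s))
    (h : {a} ∉ P.parts) : #(P.removeFromPart ha h).parts = #P.parts := by
  have hmem := P.part_mem.2 (mem_insert_self a s)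
  rw [parts_removeFromPart, card_insert_of_notMem (part_erase_notMem_erase P h),
    card_erase_add_one hmem]

def addSingleton (ha : a ∉ s) (Q : Finpartition s) : Finpartition (insert a s) :=
  Q.extend (b := {a}) (singleton_ne_empty a) (disjoint_singleton_right.2 ha)
    (by rw [sup_eq_union, union_comm, ← insert_eq])

def addToPart (ha : a ∉ s) (Q : Finpartition s) {B : Finset α} (hB : B ∈ Q.parts) :
    Finpartition (insert a s) :=
  (Q.avoid B).extend (b := insert a B) (insert_ne_empty a B)
    (by
      rw [disjoint_insert_right]
      exact ⟨fun h => ha (mem_sdiff.1 h).1, sdiff_disjoint⟩)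
    (by
      have := Q.le hB
      ext x
      simp only [sup_eq_union', union_insert, sdiff_union_self_eq_union, mem_insert, mem_union]
      grind)

theorem parts_addToPart (ha : a ∉ s) (Q : Finpartition s) {B : Finset α} (hB : B ∈ Q.parts) :
    (Q.addToPart ha hB).parts = insert (insert a B) (Q.parts.erase B) := by
  simp [addToPart, parts_avoid_of_mem Q hB]

theorem insert_notMem_parts (ha : a ∉ s) (Q : Finpartition s) (B : Finset α) :
    insert a B ∉ Q.parts := fun h => ha (Q.le h (mem_insert_self a B))

theorem card_parts_addToPart (ha : a ∉ s) (Q : Finpartition s) {B : Finset α}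
    (hB : B ∈ Q.parts) : #(Q.addToPart ha hB).parts = #Q.parts := by
  rw [parts_addToPart,
    card_insert_of_notMem fun h => insert_notMem_parts ha Q B (mem_of_mem_erase h),
    card_erase_add_one hB]

theorem part_addToPart (ha : a ∉ s) (Q : Finpartition s) {B : Finset α} (hB : B ∈ Q.parts) :
    (Q.addToPart ha hB).part a = insert a B :=
  part_eq_of_mem _ (by simp [parts_addToPart]) (mem_insert_self a B)

theorem singleton_notMem_parts_addToPart (ha : a ∉ s) (Q : Finpartition s) {B : Finset α}
    (hB : B ∈ Q.parts) : {a} ∉ (Q.addToPart ha hB).parts := by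
  intro h
  have hB' := (Q.addToPart ha hB).part_eq_of_mem h (mem_singleton_self a)
  rw [part_addToPart] at hB'
  obtain ⟨x, hx⟩ := Q.nonempty_of_mem_parts hB
  have := hB' ▸ mem_insert_of_mem hx
  rw [mem_singleton] at this
  exact ha (this ▸ Q.le hB hx)

def insertEquiv (ha : a ∉ s) (k : ℕ) :
    {P : Finpartition (insert a s) // #P.parts = k + 1} ≃
      {Q : Finpartition s // #Q.parts = k} ⊕
        Σ Q : {Q : Finpartition s // #Q.parts = k + 1}, Q.1.parts where
  toFun P :=
    if h : {a} ∈ P.1.parts then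
      .inl ⟨P.1.removeSingleton ha, by
        rw [parts_removeSingleton ha _ h, card_erase_of_mem h, P.2, Nat.add_sub_cancel]⟩
    else
      .inr ⟨⟨P.1.removeFromPart ha h, by rw [card_parts_removeFromPart, P.2]⟩,
        ⟨(P.1.part a).erase a, by simp [parts_removeFromPart]⟩⟩
  invFun
    | .inl Q => ⟨Q.1.addSingleton ha, by rw [addSingleton, card_extend, Q.2]⟩
    | .inr ⟨Q, B⟩ => ⟨Q.1.addToPart ha B.2, by rw [card_parts_addToPart, Q.2]⟩
  left_inv := by
    rintro ⟨P, hP⟩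
    by_cases h : {a} ∈ P.parts
    · simp only [dif_pos h]
      ext : 2
      simp [addSingleton, parts_removeSingleton ha _ h, insert_erase h]
    · simp only [dif_neg h]
      ext : 2
      rw [parts_addToPart, parts_removeFromPart, erase_insert (part_erase_notMem_erase P h),
        insert_erase (P.mem_part (mem_insert_self a s)),
        insert_erase (P.part_mem.2 (mem_insert_self a s))]
  right_inv := by
    rintro (⟨Q, hQ⟩ | ⟨⟨Q, hQ⟩, ⟨B, hB⟩⟩)
    · have h : {a} ∈ (Q.addSingleton ha).parts := by simp [addSingleton]
      simp only [dif_pos h, Sum.inl.injEq]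
      ext : 2
      rw [parts_removeSingleton ha _ h]
      simp [addSingleton, erase_insert fun h' => ha (Q.le h' (mem_singleton_self a))]
    · have h := singleton_notMem_parts_addToPart ha Q hB
      have haB : a ∉ B := fun h' => ha (Q.le hB h')
      simp only [dif_neg h, Sum.inr.injEq]
      refine Sigma.subtype_ext (Subtype.ext (Finpartition.ext ?_)) ?_
      · rw [parts_removeFromPart, part_addToPart, parts_addToPart, erase_insert haB,
          erase_insert fun h' => insert_notMem_parts ha Q B (mem_of_mem_erase h'),
          insert_erase hB]
      · simp [part_addToPart, erase_insert haB]

theorem card_insert_parts_eq_succ (ha : a ∉ s) (k : ℕ) :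
    Nat.card {P : Finpartition (insert a s) // #P.parts = k + 1} =
      (k + 1) * Nat.card {Q : Finpartition s // #Q.parts = k + 1} +
        Nat.card {Q : Finpartition s // #Q.parts = k} := by
  rw [Nat.card_congr (insertEquiv ha k), Nat.card_sum, Nat.card_sigma, add_comm]
  simp only [Nat.card_eq_finsetCard]
  rw [sum_congr rfl fun Q _ => Q.2, sum_const, card_univ, smul_eq_mul, mul_comm]
  simp only [Nat.card_eq_fintype_card]

theorem card_parts_eq_stirlingSecond (s : Finset α) (k : ℕ) :
    Nat.card {P : Finpartition s // #P.parts = k} = Nat.stirlingSecond #s k := by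
  induction s using Finset.induction_on generalizing k with
  | empty =>
    have hparts (P : Finpartition (∅ : Finset α)) : P.parts = ∅ := P.parts_eq_empty_iff.2 rfl
    cases k with
    | zero =>
      simp only [hparts, card_empty, Nat.card_eq_fintype_card, Fintype.card_subtype_true,
        Nat.stirlingSecond_zero]
      exact Fintype.card_eq_one_iff.2 ⟨⊥, fun P => Finpartition.ext (by simp [hparts])⟩
    | succ k => simp [hparts]
  | insert a s ha ih =>
    rw [card_insert_of_notMem ha]
    cases k with
    | zero => simp [(parts_nonempty _ (insert_ne_empty a s)).ne_empty]
    | succ k => rw [card_insert_parts_eq_succ ha, ih, ih]; rfl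

end Finpartition

theorem stirlingSubset_eq_stirlingSecond (n k : ℕ) :
    stirlingSubset n k = Nat.stirlingSecond n k := by
  rw [stirlingSubset, Finpartition.card_parts_eq_stirlingSecond, card_univ, Fintype.card_fin]

namespace Matrix

variable {R : Type*} [CommRing R]

/-- Often called *totally nonnegative*; "totally positive" follows the older convention. -/
def TotallyPositive [PartialOrder R] {m n : Type*} [LinearOrder m] [LinearOrder n]
    (A : Matrix m n R) : Prop :=
  ∀ (r : ℕ) (row : Fin r → m) (col : Fin r → n), StrictMono row → StrictMono col →
    0 ≤ (A.submatrix row col).det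

theorem det_of_sum_mul_cols {n m ι : Type*} [Fintype n] [DecidableEq n] [Fintype ι]
    (A : Matrix n m R) (c : n → ι → R) (g : n → ι → m) :
    (of fun i j => ∑ b, c j b * A i (g j b)).det =
      ∑ p : n → ι, (∏ j, c j (p j)) * (A.submatrix id fun j => g j (p j)).det := by
  rw [← det_transpose]
  have hcols : (of fun i j => ∑ b, c j b * A i (g j b))ᵀ =
      fun j => ∑ b, c j b • Aᵀ (g j b) := by
    ext j i
    simp [Finset.sum_apply]
  change detRowAlternating.toMultilinearMap _ = _
  rw [hcols, MultilinearMap.map_sum]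
  refine sum_congr rfl fun p _ => ?_
  rw [MultilinearMap.map_smul_univ, smul_eq_mul, ← det_transpose (A.submatrix _ _)]
  rfl

theorem det_submatrix_nonneg_of_monotone [PartialOrder R] {m n : Type*} [LinearOrder n]
    {A : Matrix m n R} {r : ℕ} {row : Fin r → m}
    (h : ∀ col : Fin r → n, StrictMono col → 0 ≤ (A.submatrix row col).det)
    {col : Fin r → n} (hcol : Monotone col) : 0 ≤ (A.submatrix row col).det := by
  by_cases hinj : Function.Injective col
  · exact h col (hcol.strictMono_of_injective hinj)
  · obtain ⟨i, j, hij, hne⟩ : ∃ i j, col i = col j ∧ i ≠ j := by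
      simpa [Function.Injective] using hinj
    rw [det_zero_of_column_eq hne fun k => by simp [hij]]

variable {A : Matrix ℕ ℕ R}

theorem det_submatrix_eq_of_row_zero (hA : ∀ k, A 0 (k + 1) = 0) {r : ℕ}
    {row col : Fin (r + 1) → ℕ} (hrow : row 0 = 0) (hcol : StrictMono col) :
    (A.submatrix row col).det =
      A 0 (col 0) * (A.submatrix (row ∘ Fin.succ) (col ∘ Fin.succ)).det := by
  rw [det_succ_row_zero, sum_eq_single 0]
  · simp [hrow, Fin.succAbove_zero]
  · intro j _ hj
    obtain ⟨k, hk⟩ := Nat.exists_eq_succ_of_ne_zero (hcol (Fin.pos_of_ne_zero hj)).ne_bot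
    simp [hrow, hk, hA]
  · simp

theorem det_submatrix_eq_sum_of_recurrence {w : ℕ → R}
    (hrec : ∀ n k, A (n + 1) (k + 1) = A n k + w (k + 1) * A n (k + 1)) {r : ℕ}
    {row col : Fin r → ℕ} (hrow : ∀ i, row i ≠ 0) (hcol : ∀ j, col j ≠ 0) :
    (A.submatrix row col).det =
      ∑ p : Fin r → Bool, (∏ j, if p j then w (col j) else 1) *
        (A.submatrix (fun i => row i - 1) fun j => if p j then col j else col j - 1).det := by
  refine Eq.trans (congrArg det ?_) (det_of_sum_mul_cols (A.submatrix (fun i => row i - 1) id)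
    (fun j (b : Bool) => if b then w (col j) else 1)
    (fun j (b : Bool) => if b then col j else col j - 1))
  ext i j
  obtain ⟨n, hn⟩ := Nat.exists_eq_succ_of_ne_zero (hrow i)
  obtain ⟨k, hk⟩ := Nat.exists_eq_succ_of_ne_zero (hcol j)
  simp [hn, hk, hrec]
  ring

theorem det_submatrix_nonneg_of_row_ne_zero [PartialOrder R] [IsOrderedRing R] {w : ℕ → R}
    (hw : ∀ k, 0 ≤ w k) (hA0 : ∀ n, A (n + 1) 0 = 0)
    (hrec : ∀ n k, A (n + 1) (k + 1) = A n k + w (k + 1) * A n (k + 1)) {r : ℕ}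
    {row col : Fin (r + 1) → ℕ} (hrow : ∀ i, row i ≠ 0) (hcol : StrictMono col)
    (ih : ∀ col' : Fin (r + 1) → ℕ, StrictMono col' →
      0 ≤ (A.submatrix (fun i => row i - 1) col').det) :
    0 ≤ (A.submatrix row col).det := by
  by_cases hcol0 : col 0 = 0
  · refine (det_eq_zero_of_column_eq_zero 0 fun i => ?_).ge
    obtain ⟨n, hn⟩ := Nat.exists_eq_succ_of_ne_zero (hrow i)
    simp [hn, hcol0, hA0]
  have hcol_pos (j : Fin (r + 1)) : col j ≠ 0 := by
    have := hcol.monotone (Fin.zero_le j)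
    omega
  rw [det_submatrix_eq_sum_of_recurrence hrec hrow hcol_pos]
  refine sum_nonneg fun p _ => mul_nonneg (prod_nonneg fun j _ => ?_) ?_
  · split <;> simp [hw]
  refine det_submatrix_nonneg_of_monotone ih fun i j hij => ?_
  rcases hij.lt_or_eq with hlt | rfl
  · have := hcol hlt
    split_ifs <;> omega
  · rfl

theorem totallyPositive_of_recurrence [PartialOrder R] [IsOrderedRing R] {w : ℕ → R}
    (hw : ∀ k, 0 ≤ w k) (hA00 : 0 ≤ A 0 0) (hA0 : ∀ k, A 0 (k + 1) = 0)
    (hA0' : ∀ n, A (n + 1) 0 = 0)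
    (hrec : ∀ n k, A (n + 1) (k + 1) = A n k + w (k + 1) * A n (k + 1)) :
    A.TotallyPositive := by
  suffices ∀ N r (row col : Fin r → ℕ), StrictMono row → StrictMono col →
      ∑ i, (row i + 1) = N → 0 ≤ (A.submatrix row col).det from
    fun r row col hrow hcol => this _ r row col hrow hcol rfl
  intro N
  induction N using Nat.strong_induction_on with | _ N ih => ?_
  rintro (_ | r) row col hrow hcol rfl
  · simp
  by_cases hrow0 : row 0 = 0
  · rw [det_submatrix_eq_of_row_zero hA0 hrow0 hcol]
    refine mul_nonneg ?_ (ih _ ?_ r _ _ (hrow.comp Fin.strictMono_succ)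
      (hcol.comp Fin.strictMono_succ) rfl)
    · cases col 0 <;> simp [hA00, hA0]
    · rw [Fin.sum_univ_succ (fun i => row i + 1)]
      simp
  have hrow_pos (i : Fin (r + 1)) : row i ≠ 0 := by
    have := hrow.monotone (Fin.zero_le i)
    omega
  refine det_submatrix_nonneg_of_row_ne_zero hw hA0' hrec hrow_pos hcol
    fun col' hcol' => ih _ ?_ _ _ col' (fun i j hij => ?_) hcol' rfl
  · calc ∑ i, (row i - 1 + 1) = ∑ i, row i :=
          sum_congr rfl fun i _ => Nat.sub_add_cancel (Nat.one_le_iff_ne_zero.2 (hrow_pos i))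
      _ < ∑ i, (row i + 1) := sum_lt_sum_of_nonempty univ_nonempty fun i _ => lt_add_one _
  · have := hrow hij
    have := hrow_pos i
    omega

end Matrix

theorem totallyPositive_stirlingSecond {R : Type*} [CommRing R] [PartialOrder R]
    [IsOrderedRing R] : (of fun n k => (Nat.stirlingSecond n k : R)).TotallyPositive :=
  totallyPositive_of_recurrence (w := fun k => k) (fun k => k.cast_nonneg) (by simp)
    (fun k => by simp) (fun n => by simp)
    (fun n k => by simp [Nat.stirlingSecond_succ_succ]; ring)

theorem stirlingSubset_totally_positive_general
    (r : ℕ) (row col : Fin r → ℕ)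
    (hrow : StrictMono row) (hcol : StrictMono col) :
    0 ≤ Matrix.det (Matrix.of fun i j : Fin r => (stirlingSubset (row i) (col j) : ℝ)) := by
  simp only [stirlingSubset_eq_stirlingSecond]
  exact totallyPositive_stirlingSecond r row col hrow hcol

/-- The Stirling subset triangle `(S(n,k))_{n,k≥0}` is totally positive:
every minor, with rows `n₁ < ⋯ < n_r` and columns `k₁ < ⋯ < k_r`,
is nonnegative. -/
theorem stirlingSubset_totally_positive
    (r : ℕ) (hr : 1 ≤ r) (row col : Fin r → ℕ)
    (hrow : StrictMono row) (hcol : StrictMono col) :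
    0 ≤ Matrix.det (Matrix.of fun i j : Fin r => (stirlingSubset (row i) (col j) : ℝ)) :=
  stirlingSubset_totally_positive_general r row col hrow hcol
end
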